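/- arXiv:1202.3186 — 2 statements merged into one kernel-verified Lean document; each statement's English description precedes it below -/
import Mathlib

section
/- In R-Wythoff, for all nonnegative integers a and c, there exists a unique nonnegative integer b such that G_R(b, a + b) = c. -/
noncomputable section

/-- The golden ratio. -/
def phi : ℝ := (1 + Real.sqrt 5) / 2

/-- Minimum excluded value of a set of naturals. -/
def mex (S : Set ℕ) : ℕ := sInf {n | n ∉ S}

/-- Sort a pair of naturals into nondecreasing order. -/
def sortPair (p : ℕ × ℕ) : ℕ × ℕ := (min p.1 p.2, max p.1 p.2)

/-- Moves of R-Wythoff (positions are unordered pairs of pile sizes): remove a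
positive number of tokens from the larger pile (either pile if equal), or an
equal positive number of tokens from both piles. -/
def RMove (p q : ℕ × ℕ) : Prop :=
  (∃ t < max p.1 p.2, sortPair q = sortPair (min p.1 p.2, t)) ∨
  (∃ k, 0 < k ∧ k ≤ min p.1 p.2 ∧ sortPair q = (min p.1 p.2 - k, max p.1 p.2 - k))

lemma RMove.sum_lt {p q : ℕ × ℕ} (h : RMove p q) : q.1 + q.2 < p.1 + p.2 := by
  rcases h with ⟨t, ht, hq⟩ | ⟨k, hk0, hk, hq⟩ <;>
  · simp only [sortPair, Prod.mk.injEq] at hq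
    omega

/-- Sprague–Grundy function of R-Wythoff. -/
noncomputable def grundyR : ℕ × ℕ → ℕ
  | p => mex {v | ∃ q, ∃ _ : RMove p q, grundyR q = v}
termination_by p => p.1 + p.2
decreasing_by exact RMove.sum_lt (by assumption)


lemma grundy_eq (p : ℕ × ℕ) :
    grundyR p = mex {v | ∃ q, ∃ _ : RMove p q, grundyR q = v} := by
  rw [grundyR]

lemma grundy_le_aux : ∀ n (p : ℕ × ℕ), p.1 + p.2 = n → grundyR p ≤ p.1 + p.2 := by
  intro n
  induction n using Nat.strong_induction_on with
  | _ n ih =>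
    intro p hp
    rw [grundy_eq]
    apply Nat.sInf_le
    simp only [Set.mem_setOf_eq]
    rintro ⟨q, hq, hv⟩
    have h1 := hq.sum_lt
    have h2 := ih (q.1 + q.2) (by omega) q rfl
    omega

lemma grundy_le (p : ℕ × ℕ) : grundyR p ≤ p.1 + p.2 := grundy_le_aux _ p rfl

lemma mem_of_lt_grundy {p : ℕ × ℕ} {v : ℕ} (h : v < grundyR p) :
    ∃ q, RMove p q ∧ grundyR q = v := by
  rw [grundy_eq] at h
  by_contra hc
  push_neg at hc
  have hv : v ∈ {n | n ∉ {v | ∃ q, ∃ _ : RMove p q, grundyR q = v}} := by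
    rintro ⟨q, hq, hqv⟩
    exact hc q hq hqv
  exact (Nat.sInf_le hv).not_gt h

lemma grundy_ne_of_move {p q : ℕ × ℕ} (h : RMove p q) : grundyR q ≠ grundyR p := by
  intro he
  have hne : {n | n ∉ {v | ∃ q, ∃ _ : RMove p q, grundyR q = v}}.Nonempty := by
    refine ⟨p.1 + p.2, ?_⟩
    rintro ⟨q', hq', hv⟩
    have h1 := hq'.sum_lt
    have h2 := grundy_le q'
    omega
  have hnot : grundyR p ∉ {v | ∃ q, ∃ _ : RMove p q, grundyR q = v} := by
    rw [grundy_eq]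
    exact Nat.sInf_mem hne
  exact hnot ⟨q, h, he⟩

lemma RMove_comm (x y : ℕ) (q : ℕ × ℕ) : RMove (x, y) q ↔ RMove (y, x) q := by
  simp only [RMove]
  rw [min_comm x y, max_comm x y]

lemma grundy_swap (x y : ℕ) : grundyR (x, y) = grundyR (y, x) := by
  rw [grundy_eq, grundy_eq]
  congr 1
  ext v
  simp only [Set.mem_setOf_eq]
  constructor
  · rintro ⟨q, hq, hv⟩; exact ⟨q, (RMove_comm x y q).mp hq, hv⟩
  · rintro ⟨q, hq, hv⟩; exact ⟨q, (RMove_comm x y q).mpr hq, hv⟩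

lemma grundy_sortPair (q : ℕ × ℕ) : grundyR (sortPair q) = grundyR q := by
  rcases le_total q.1 q.2 with h | h
  · simp [sortPair, min_eq_left h, max_eq_right h]
  · simp [sortPair, min_eq_right h, max_eq_left h, grundy_swap]

lemma sortPair_idem (p : ℕ × ℕ) : sortPair (sortPair p) = sortPair p := by
  simp [sortPair]

lemma move_row {x y t : ℕ} (hxy : x ≤ y) (ht : t < y) : RMove (x, y) (sortPair (x, t)) := by
  left
  refine ⟨t, ?_, ?_⟩
  · simpa [max_eq_right hxy] using ht
  · rw [show min (x, y).1 (x, y).2 = x from min_eq_left hxy]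
    exact sortPair_idem _

lemma move_diag {x y k : ℕ} (hxy : x ≤ y) (hk : 0 < k) (hkx : k ≤ x) :
    RMove (x, y) (x - k, y - k) := by
  right
  refine ⟨k, hk, ?_, ?_⟩
  · simpa [min_eq_left hxy] using hkx
  · simp only [sortPair]
    rw [show min (x, y).1 (x, y).2 = x from min_eq_left hxy,
        show max (x, y).1 (x, y).2 = y from max_eq_right hxy]
    have h1 : x - k ≤ y - k := by omega
    simp [min_eq_left h1, max_eq_right h1]


lemma neA {x y₁ y₂ : ℕ} (h1 : x ≤ y₁) (h2 : y₁ < y₂) :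
    grundyR (x, y₁) ≠ grundyR (x, y₂) := by
  intro he
  have hm := move_row (x := x) (y := y₂) (t := y₁) (h1.trans h2.le) h2
  have := grundy_ne_of_move hm
  rw [grundy_sortPair] at this
  exact this he

lemma neB {x₁ x₂ d : ℕ} (h : x₁ < x₂) :
    grundyR (x₁, x₁ + d) ≠ grundyR (x₂, x₂ + d) := by
  intro he
  have hm := move_diag (x := x₂) (y := x₂ + d) (k := x₂ - x₁)
    (Nat.le_add_right _ _) (by omega) (by omega)
  have h2 : (x₂ - (x₂ - x₁), x₂ + d - (x₂ - x₁)) = (x₁, x₁ + d) := by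
    have : x₂ - (x₂ - x₁) = x₁ := by omega
    have : x₂ + d - (x₂ - x₁) = x₁ + d := by omega
    simp_all
  rw [h2] at hm
  exact grundy_ne_of_move hm he

lemma neC {x₂ y₂ y₁ : ℕ} (h1 : x₂ ≤ y₂) (h2 : y₂ ≤ y₁) (h3 : x₂ < y₁) :
    grundyR (x₂, y₂) ≠ grundyR (y₂, y₁) := by
  intro he
  have hm := move_row (x := y₂) (y := y₁) (t := x₂) h2 h3
  have hs : sortPair (y₂, x₂) = (x₂, y₂) := by
    simp [sortPair, min_eq_right h1, max_eq_left h1]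
  rw [hs] at hm
  exact grundy_ne_of_move hm he


/-- P-positions of R-Wythoff: a position is P iff every move leads to a
non-P (i.e. N) position. -/
def RPPos : ℕ × ℕ → Prop
  | p => ∀ q, RMove p q → ¬ RPPos q
termination_by p => p.1 + p.2
decreasing_by exact RMove.sum_lt (by assumption)

/-- Every Sprague–Grundy value occurs exactly once on each diagonal of
R-Wythoff. -/
theorem RWythoff_diagonal (a c : ℕ) : ∃! b : ℕ, grundyR (b, a + b) = c := by
  classical
  have inj : ∀ b₁ b₂ : ℕ, grundyR (b₁, a + b₁) = grundyR (b₂, a + b₂) → b₁ = b₂ := by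
    intro b₁ b₂ h
    by_contra hne
    have h' : grundyR (b₁, b₁ + a) = grundyR (b₂, b₂ + a) := by
      rw [add_comm b₁ a, add_comm b₂ a]; exact h
    rcases Nat.lt_or_ge b₁ b₂ with hl | hl
    · exact neB hl h'
    · exact neB (by omega : b₂ < b₁) h'.symm
  have hex : ∃ b, grundyR (b, a + b) = c := by
    by_contra H
    push_neg at H
    -- from any diagonal position with big value, extract a value-c follower off the diagonal
    have key : ∀ b, c < grundyR (b, a + b) →
        ∃ t, t < a + b ∧ grundyR (sortPair (b, t)) = c := by
      intro b hb
      obtain ⟨q, hq, hv⟩ := mem_of_lt_grundy hb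
      have hble : b ≤ a + b := Nat.le_add_left b a
      rcases hq with ⟨t, ht, hst⟩ | ⟨k, hk0, hk, hst⟩
      · refine ⟨t, ?_, ?_⟩
        · simpa [max_eq_right hble] using ht
        · rw [show min (b, a + b).1 (b, a + b).2 = b from min_eq_left hble] at hst
          rw [← hst, grundy_sortPair]
          exact hv
      · exfalso
        rw [show min (b, a + b).1 (b, a + b).2 = b from min_eq_left hble] at hst hk
        rw [show max (b, a + b).1 (b, a + b).2 = a + b from max_eq_right hble] at hst
        have hc : grundyR (b - k, a + (b - k)) = c := by
          rw [show a + (b - k) = a + b - k by omega, ← hst, grundy_sortPair]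
          exact hv
        exact H _ hc
    choose tf htf1 htf2 using key
    set f : ℕ → ℕ := fun b => if h : c < grundyR (b, a + b) then tf b h else 0 with hf
    have hf1 : ∀ b, c < grundyR (b, a + b) → f b < a + b := by
      intro b hb; simp only [hf, dif_pos hb]; exact htf1 b hb
    have hf2 : ∀ b, c < grundyR (b, a + b) → grundyR (sortPair (b, f b)) = c := by
      intro b hb; simp only [hf, dif_pos hb]; exact htf2 b hb
    set N := 2 * a + 2 * c + 1 with hN
    set G := (Finset.range N).filter (fun b => c < grundyR (b, a + b)) with hG
    have hGmem : ∀ b ∈ G, b < N ∧ c < grundyR (b, a + b) := by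
      intro b hb
      obtain ⟨h1, h2⟩ := Finset.mem_filter.mp hb
      exact ⟨Finset.mem_range.mp h1, h2⟩
    have hGcard : N ≤ G.card + c := by
      have hsub : Finset.range N ⊆
          G ∪ (Finset.range N).filter (fun b => grundyR (b, a + b) < c) := by
        intro b hb
        rcases lt_trichotomy (grundyR (b, a + b)) c with h | h | h
        · exact Finset.mem_union_right _ (Finset.mem_filter.mpr ⟨hb, h⟩)
        · exact absurd h (H b)
        · exact Finset.mem_union_left _ (Finset.mem_filter.mpr ⟨hb, h⟩)
      have hbad : ((Finset.range N).filter (fun b => grundyR (b, a + b) < c)).card ≤ c := by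
        have hinj : Set.InjOn (fun b => grundyR (b, a + b))
            ((Finset.range N).filter (fun b => grundyR (b, a + b) < c)) :=
          fun b₁ _ b₂ _ h => inj b₁ b₂ h
        have := Finset.card_le_card_of_injOn (fun b => grundyR (b, a + b))
          (fun b hb => Finset.mem_range.mpr (Finset.mem_filter.mp hb).2) hinj
        simpa using this
      have h1 := Finset.card_le_card hsub
      have h2 := Finset.card_union_le G
        ((Finset.range N).filter (fun b => grundyR (b, a + b) < c))
      simp only [Finset.card_range] at h1
      omega
    set Mn := G.filter (fun b => b ≤ f b) with hMn
    set Mx := G.filter (fun b => f b < b) with hMx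
    have hsplit : G.card ≤ Mn.card + Mx.card := by
      have : G ⊆ Mn ∪ Mx := by
        intro b hb
        rcases le_or_gt b (f b) with h | h
        · exact Finset.mem_union_left _ (Finset.mem_filter.mpr ⟨hb, h⟩)
        · exact Finset.mem_union_right _ (Finset.mem_filter.mpr ⟨hb, h⟩)
      exact le_trans (Finset.card_le_card this) (Finset.card_union_le _ _)
    -- value-c positions recovered
    have hposMn : ∀ b ∈ Mn, grundyR (b, b + (f b - b)) = c := by
      intro b hb
      obtain ⟨hbG, hle⟩ := Finset.mem_filter.mp hb
      have hc := hf2 b (hGmem b hbG).2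
      rw [show sortPair (b, f b) = (b, f b) by
        simp [sortPair, min_eq_left hle, max_eq_right hle]] at hc
      rwa [show b + (f b - b) = f b by omega]
    have hposMx : ∀ b ∈ Mx, grundyR (f b, b) = c := by
      intro b hb
      obtain ⟨hbG, hlt⟩ := Finset.mem_filter.mp hb
      have hc := hf2 b (hGmem b hbG).2
      rwa [show sortPair (b, f b) = (f b, b) by
        simp [sortPair, min_eq_right hlt.le, max_eq_left hlt.le]] at hc
    have hMncard : Mn.card ≤ a := by
      have hmaps : ∀ b ∈ Mn, f b - b ∈ Finset.range a := by
        intro b hb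
        obtain ⟨hbG, hle⟩ := Finset.mem_filter.mp hb
        have := hf1 b (hGmem b hbG).2
        exact Finset.mem_range.mpr (by omega)
      have hinj : Set.InjOn (fun b => f b - b) Mn := by
        intro b₁ h₁ b₂ h₂ he
        by_contra hne
        have g₁ := hposMn b₁ h₁
        have g₂ := hposMn b₂ h₂
        simp only at he
        rw [he] at g₁
        rcases Nat.lt_or_ge b₁ b₂ with hl | hl
        · exact neB hl (g₁.trans g₂.symm)
        · exact neB (by omega : b₂ < b₁) (g₂.trans g₁.symm)
      have := Finset.card_le_card_of_injOn (fun b => f b - b) hmaps hinj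
      simpa using this
    have hMxcard : 2 * Mx.card ≤ N := by
      have hsubN : Mx ⊆ Finset.range N := by
        intro b hb
        exact Finset.mem_range.mpr (hGmem b (Finset.mem_filter.mp hb).1).1
      have hmaps : ∀ b ∈ Mx, f b ∈ Finset.range N \ Mx := by
        intro b hb
        obtain ⟨hbG, hlt⟩ := Finset.mem_filter.mp hb
        have hbN := (hGmem b hbG).1
        refine Finset.mem_sdiff.mpr ⟨Finset.mem_range.mpr (by omega), ?_⟩
        intro hmem
        obtain ⟨hmG, hmlt⟩ := Finset.mem_filter.mp hmem
        -- f b ∈ Mx : position (f (f b), f b) has value c, as does (f b, b)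
        have g₁ := hposMx b hb
        have g₂ := hposMx (f b) hmem
        exact neC hmlt.le hlt.le (by omega) (g₂.trans g₁.symm)
      have hinj : Set.InjOn f Mx := by
        intro b₁ h₁ b₂ h₂ he
        by_contra hne
        obtain ⟨_, hlt₁⟩ := Finset.mem_filter.mp h₁
        obtain ⟨_, hlt₂⟩ := Finset.mem_filter.mp h₂
        have g₁ := hposMx b₁ h₁
        have g₂ := hposMx b₂ h₂
        rw [he] at g₁
        rcases Nat.lt_or_ge b₁ b₂ with hl | hl
        · exact neA (by omega : f b₂ ≤ b₁) hl (g₁.trans g₂.symm)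
        · exact neA (by omega : f b₂ ≤ b₂) (by omega : b₂ < b₁) (g₂.trans g₁.symm)
      have h1 := Finset.card_le_card_of_injOn f hmaps hinj
      have h2 : (Finset.range N \ Mx).card = N - Mx.card := by
        rw [Finset.card_sdiff_of_subset hsubN, Finset.card_range]
      have h3 := Finset.card_le_card hsubN
      simp only [Finset.card_range] at h3
      omega
    omega
  obtain ⟨b, hb⟩ := hex
  exact ⟨b, hb, fun b' hb' => inj b' b (hb'.trans hb.symm)⟩


end
end

section
/- In E-Wythoff, the set of P-positions is exactly {(⌊φn⌋, ⌊φn⌋ + n) : n ≥ 0} (up to swapping coordinates), coinciding with the P-positions of Wythoff's game, where φ = (1+√5)/2. -/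
noncomputable section

/-- Moves of E-Wythoff (positions are unordered pairs of pile sizes): remove a
positive number of tokens from one pile, an equal positive number from both
piles, or `k` tokens from the smaller pile and `l` from the larger pile where
`k > l ≥ 0`. -/
def EMove (p q : ℕ × ℕ) : Prop :=
  (∃ t < max p.1 p.2, sortPair q = sortPair (min p.1 p.2, t)) ∨
  (∃ t < min p.1 p.2, sortPair q = sortPair (t, max p.1 p.2)) ∨
  (∃ k, 0 < k ∧ k ≤ min p.1 p.2 ∧ sortPair q = (min p.1 p.2 - k, max p.1 p.2 - k)) ∨
  (∃ k l, l < k ∧ k ≤ min p.1 p.2 ∧ sortPair q = sortPair (min p.1 p.2 - k, max p.1 p.2 - l))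

lemma EMove.sum_lt {p q : ℕ × ℕ} (h : EMove p q) : q.1 + q.2 < p.1 + p.2 := by
  rcases h with ⟨t, ht, hq⟩ | ⟨t, ht, hq⟩ | ⟨k, hk0, hk, hq⟩ | ⟨k, l, hlk, hk, hq⟩ <;>
  · simp only [sortPair, Prod.mk.injEq] at hq
    omega

/-- Sprague–Grundy function of E-Wythoff. -/
noncomputable def grundyE : ℕ × ℕ → ℕ
  | p => mex {v | ∃ q, ∃ _ : EMove p q, grundyE q = v}
termination_by p => p.1 + p.2
decreasing_by exact EMove.sum_lt (by assumption)

/-- P-positions of E-Wythoff. -/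
def EPPos : ℕ × ℕ → Prop
  | p => ∀ q, EMove p q → ¬ EPPos q
termination_by p => p.1 + p.2
decreasing_by exact EMove.sum_lt (by assumption)

/-!
Wythoff pairs `(aₙ, bₙ) = (⌊nφ⌋, ⌊nφ⌋ + n)` form a kernel of the move graph (no move joins two
of them, and every other position has a move into one), and a kernel of a well-founded game is
its set of P-positions. Since `1/φ + 1/(φ + 1) = 1`, Rayleigh's theorem says that `aₙ` (`n ≥ 0`)
and `bₙ` (`n ≥ 1`) partition ℕ, while `bₙ - aₙ = n`. So a move that keeps one pile cannot join
two Wythoff pairs, since that pile determines the pair; neither can an equal removal, which keeps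
the difference; and removing more from the smaller pile raises the difference but lowers the
smaller pile, against the monotonicity of `aₙ`. Conversely, from a non-Wythoff `(a, b)`, `a ≤ b`,
write `a = aₘ` or `a = bₘ`: shortening one pile reaches `(aₘ, bₘ)` unless `a = aₘ` and `b < bₘ`,
in which case an equal removal reaches the pair with difference `b - a < m`.
-/

open Real

lemma phi_eq_goldenRatio : phi = goldenRatio := rfl

lemma phi_pos : 0 < phi := goldenRatio_pos

lemma holderConjugate_goldenRatio : goldenRatio.HolderConjugate (goldenRatio + 1) := by
  rw [holderConjugate_iff_eq_conjExponent one_lt_goldenRatio,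
    eq_div_iff (sub_ne_zero.2 one_lt_goldenRatio.ne')]
  linear_combination goldenRatio_sq

lemma strictMono_floor_mul {r : ℝ} (hr : 1 ≤ r) : StrictMono fun n : ℕ ↦ ⌊r * n⌋₊ := by
  refine strictMono_nat_of_lt_succ fun n ↦ ?_
  have h_step : r * n + 1 ≤ r * (n + 1 : ℕ) := by push_cast; linarith
  have h_nonneg : 0 ≤ r * n := by positivity
  calc ⌊r * n⌋₊ < ⌊r * n⌋₊ + 1 := Nat.lt_succ_self _
    _ = ⌊r * n + 1⌋₊ := (Nat.floor_add_one h_nonneg).symm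
    _ ≤ ⌊r * (n + 1 : ℕ)⌋₊ := Nat.floor_le_floor h_step

lemma beattySeq_natCast {r : ℝ} (hr : 0 ≤ r) (n : ℕ) : beattySeq r n = ⌊r * n⌋₊ := by
  rw [beattySeq, Int.natCast_floor_eq_floor (by positivity), mul_comm, Int.cast_natCast]

lemma natCast_mem_beattySeq_pos_iff {r : ℝ} (hr : 0 ≤ r) (a : ℕ) :
    (a : ℤ) ∈ {beattySeq r k | k > 0} ↔ ∃ m : ℕ, 0 < m ∧ ⌊r * m⌋₊ = a := by
  constructor
  · rintro ⟨k, hk, hka⟩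
    lift k to ℕ using hk.le
    exact ⟨k, by exact_mod_cast hk, by rwa [beattySeq_natCast hr, Nat.cast_inj] at hka⟩
  · rintro ⟨m, hm, hma⟩
    exact ⟨m, by exact_mod_cast hm, by rw [beattySeq_natCast hr, hma]⟩

def wythoffA (n : ℕ) : ℕ := ⌊phi * n⌋₊

def wythoffB (n : ℕ) : ℕ := wythoffA n + n

lemma wythoffA_zero : wythoffA 0 = 0 := by simp [wythoffA]

lemma wythoffB_zero : wythoffB 0 = 0 := by simp [wythoffB, wythoffA_zero]

lemma wythoffA_le_wythoffB (n : ℕ) : wythoffA n ≤ wythoffB n := Nat.le_add_right _ _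

lemma wythoffA_strictMono : StrictMono wythoffA :=
  strictMono_floor_mul one_lt_goldenRatio.le

lemma wythoffB_strictMono : StrictMono wythoffB := fun _ _ h ↦
  Nat.add_lt_add (wythoffA_strictMono h) h

lemma wythoffB_eq_floor (n : ℕ) : wythoffB n = ⌊(phi + 1) * n⌋₊ := by
  rw [wythoffB, wythoffA, add_mul, one_mul, Nat.floor_add_natCast (by positivity [phi_pos])]

lemma exists_wythoffA_eq_iff_not_exists_wythoffB_eq {a : ℕ} (ha : 0 < a) :
    (∃ m, 0 < m ∧ wythoffA m = a) ↔ ¬ ∃ m, 0 < m ∧ wythoffB m = a := by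
  have h := Set.ext_iff.1 (Irrational.beattySeq_symmDiff_beattySeq_pos
    holderConjugate_goldenRatio goldenRatio_irrational) a
  simp only [Set.mem_symmDiff, ← phi_eq_goldenRatio, natCast_mem_beattySeq_pos_iff phi_pos.le,
    natCast_mem_beattySeq_pos_iff (by linarith [phi_pos] : 0 ≤ phi + 1), Set.mem_ofPred_eq,
    Nat.cast_pos, ha, iff_true] at h
  simp only [wythoffA, wythoffB_eq_floor]
  exact xor_iff_iff_not.1 h

lemma exists_eq_wythoffA_or_wythoffB (a : ℕ) :
    ∃ m, a = wythoffA m ∨ 0 < m ∧ a = wythoffB m := by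
  rcases Nat.eq_zero_or_pos a with rfl | ha
  · exact ⟨0, .inl wythoffA_zero.symm⟩
  by_cases hA : ∃ m, 0 < m ∧ wythoffA m = a
  · obtain ⟨m, -, rfl⟩ := hA
    exact ⟨m, .inl rfl⟩
  · rw [exists_wythoffA_eq_iff_not_exists_wythoffB_eq ha, not_not] at hA
    obtain ⟨m, hm, rfl⟩ := hA
    exact ⟨m, .inr ⟨hm, rfl⟩⟩

lemma wythoffA_eq_wythoffB_iff {n m : ℕ} : wythoffA n = wythoffB m ↔ n = 0 ∧ m = 0 := by
  constructor
  · intro h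
    rcases Nat.eq_zero_or_pos n with rfl | hn
    · rw [wythoffA_zero, eq_comm, ← wythoffB_zero] at h
      exact ⟨rfl, wythoffB_strictMono.injective h⟩
    have hA : 0 < wythoffA n := wythoffA_zero ▸ wythoffA_strictMono hn
    rcases Nat.eq_zero_or_pos m with rfl | hm
    · rw [wythoffB_zero] at h
      omega
    · exact ((exists_wythoffA_eq_iff_not_exists_wythoffB_eq hA).1 ⟨n, hn, rfl⟩ ⟨m, hm, h.symm⟩).elim
  · rintro ⟨rfl, rfl⟩
    rw [wythoffA_zero, wythoffB_zero]

def IsWythoffPair (p : ℕ × ℕ) : Prop := ∃ n, sortPair p = (wythoffA n, wythoffB n)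

lemma sortPair_of_le {a b : ℕ} (h : a ≤ b) : sortPair (a, b) = (a, b) := by
  simp [sortPair, h]

lemma sortPair_swap (a b : ℕ) : sortPair (a, b) = sortPair (b, a) := by
  simp [sortPair, min_comm, max_comm]

lemma isWythoffPair_congr {p q : ℕ × ℕ} (h : sortPair p = sortPair q) :
    IsWythoffPair p ↔ IsWythoffPair q := by
  rw [IsWythoffPair, IsWythoffPair, h]

lemma isWythoffPair_swap {a b : ℕ} : IsWythoffPair (a, b) ↔ IsWythoffPair (b, a) :=
  isWythoffPair_congr (sortPair_swap a b)

lemma isWythoffPair_min_max (p : ℕ × ℕ) :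
    IsWythoffPair (min p.1 p.2, max p.1 p.2) ↔ IsWythoffPair p :=
  isWythoffPair_congr (sortPair_of_le min_le_max)

lemma isWythoffPair_iff_of_le {a b : ℕ} (h : a ≤ b) :
    IsWythoffPair (a, b) ↔ ∃ n, a = wythoffA n ∧ b = wythoffB n := by
  simp [IsWythoffPair, sortPair_of_le h]

lemma isWythoffPair_wythoff (n : ℕ) : IsWythoffPair (wythoffA n, wythoffB n) :=
  (isWythoffPair_iff_of_le (wythoffA_le_wythoffB n)).2 ⟨n, rfl, rfl⟩

lemma IsWythoffPair.right_unique {x y z : ℕ} (hy : IsWythoffPair (x, y))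
    (hz : IsWythoffPair (x, z)) : y = z := by
  obtain ⟨n, hn⟩ := hy
  obtain ⟨m, hm⟩ := hz
  simp only [sortPair, Prod.mk.injEq] at hn hm
  have hnm : n = m := by
    rcases (by omega : x = wythoffA n ∨ x = wythoffB n) with hxn | hxn <;>
      rcases (by omega : x = wythoffA m ∨ x = wythoffB m) with hxm | hxm
    · exact wythoffA_strictMono.injective (hxn.symm.trans hxm)
    · obtain ⟨rfl, rfl⟩ := wythoffA_eq_wythoffB_iff.1 (hxn.symm.trans hxm)
      rfl
    · obtain ⟨rfl, rfl⟩ := wythoffA_eq_wythoffB_iff.1 (hxm.symm.trans hxn)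
      rfl
    · exact wythoffB_strictMono.injective (hxn.symm.trans hxm)
  subst hnm
  omega

lemma IsWythoffPair.not_isWythoffPair_of_eMove {p q : ℕ × ℕ} (hp : IsWythoffPair p)
    (hpq : EMove p q) : ¬ IsWythoffPair q := by
  intro hq
  rw [← isWythoffPair_min_max] at hp
  obtain ⟨n, ha, hb⟩ := (isWythoffPair_iff_of_le min_le_max).1 hp
  rcases hpq with ⟨t, ht, hqt⟩ | ⟨t, ht, hqt⟩ | ⟨k, hk0, hk, hqt⟩ | ⟨k, l, hlk, hk, hqt⟩
  · rw [isWythoffPair_congr hqt] at hq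
    exact ht.ne (hq.right_unique hp)
  · rw [isWythoffPair_congr hqt, isWythoffPair_swap] at hq
    exact ht.ne (hq.right_unique (isWythoffPair_swap.1 hp))
  · obtain ⟨m, hm⟩ := hq
    rw [hm, ha, hb] at hqt
    simp only [Prod.mk.injEq, wythoffB] at hqt
    obtain rfl : m = n := by omega
    omega
  · obtain ⟨m, hm⟩ := hq
    rw [hm, ha, hb] at hqt
    simp only [sortPair, Prod.mk.injEq, wythoffB] at hqt
    have := wythoffA_strictMono (by omega : n < m)
    omega

lemma exists_eMove_isWythoffPair {p : ℕ × ℕ} (hp : ¬ IsWythoffPair p) :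
    ∃ q, EMove p q ∧ IsWythoffPair q := by
  rw [← isWythoffPair_min_max, isWythoffPair_iff_of_le min_le_max] at hp
  obtain ⟨m, ha | ⟨hm, ha⟩⟩ := exists_eq_wythoffA_or_wythoffB (min p.1 p.2)
  · rcases lt_trichotomy (max p.1 p.2) (wythoffB m) with hb | hb | hb
    · have hab : min p.1 p.2 ≤ max p.1 p.2 := min_le_max
      set d := max p.1 p.2 - min p.1 p.2
      have hd := wythoffA_strictMono (by simp only [wythoffB] at hb; omega : d < m)
      refine ⟨(wythoffA d, wythoffB d),
        .inr (.inr (.inl ⟨min p.1 p.2 - wythoffA d, by omega, by omega, ?_⟩)),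
        isWythoffPair_wythoff d⟩
      rw [sortPair_of_le (wythoffA_le_wythoffB d), wythoffB]
      ext <;> simp only <;> omega
    · exact absurd ⟨m, ha, hb⟩ hp
    · exact ⟨_, .inl ⟨wythoffB m, hb, by rw [ha]⟩, isWythoffPair_wythoff m⟩
  · have h_lt : wythoffA m < min p.1 p.2 := by rw [ha, wythoffB]; omega
    refine ⟨_, .inl ⟨wythoffA m, h_lt.trans_le min_le_max, ?_⟩, isWythoffPair_wythoff m⟩
    rw [ha, sortPair_swap]

theorem EPPos_iff_of_kernel (S : ℕ × ℕ → Prop) (h_indep : ∀ p q, S p → EMove p q → ¬ S q)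
    (h_absorb : ∀ p, ¬ S p → ∃ q, EMove p q ∧ S q) : ∀ p, EPPos p ↔ S p
  | p => by
    have ih : ∀ q, EMove p q → (EPPos q ↔ S q) := fun q _ ↦
      EPPos_iff_of_kernel S h_indep h_absorb q
    rw [EPPos]
    constructor
    · intro hP
      by_contra hS
      obtain ⟨q, hpq, hq⟩ := h_absorb p hS
      exact hP q hpq ((ih q hpq).2 hq)
    · intro hS q hpq hq
      exact h_indep p q hS hpq ((ih q hpq).1 hq)
termination_by p => p.1 + p.2
decreasing_by exact EMove.sum_lt ‹_›

/-- The P-positions of E-Wythoff are exactly the pairs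
`(⌊φn⌋, ⌊φn⌋ + n)`, `n ≥ 0`, up to swapping coordinates. -/
theorem EWythoff_P_positions (a b : ℕ) :
    EPPos (a, b) ↔ ∃ n : ℕ, sortPair (a, b) = (⌊phi * n⌋₊, ⌊phi * n⌋₊ + n) :=
  EPPos_iff_of_kernel IsWythoffPair (fun _ _ hp ↦ hp.not_isWythoffPair_of_eMove)
    (fun _ ↦ exists_eMove_isWythoffPair) (a, b)

end
end
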